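/- Let g : ℝ → ℝ be a non-decreasing continuous function and G ≥ 0 satisfy g(−γ) + G > 0 and g(γ) − G < 0. If a margin-based loss φ : ℝ → [0,∞) is convex, then φ is not H_g-calibrated with respect to the adversarial 0/1 loss ℓ_γ. In particular, if G > γ, then φ is not H_relu-calibrated with respect to ℓ_γ. -/

import Mathlib

open scoped RealInnerProductSpace

noncomputable section

/-- A loss assigns a value to a predictor `f`, a point `x`, and a label `y` (±1). -/
abbrev Loss (d : ℕ) := ((EuclideanSpace ℝ (Fin d)) → ℝ) → (EuclideanSpace ℝ (Fin d)) → ℝ → ℝ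

variable {d : ℕ}

/-- The inner (conditional) ℓ-risk. -/
def innerRisk (ℓ : Loss d) (f : EuclideanSpace ℝ (Fin d) → ℝ)
    (x : EuclideanSpace ℝ (Fin d)) (η : ℝ) : ℝ :=
  η * ℓ f x 1 + (1 - η) * ℓ f x (-1)

/-- The minimal inner ℓ-risk over a hypothesis set `H`. -/
def minInnerRisk (ℓ : Loss d) (H : Set (EuclideanSpace ℝ (Fin d) → ℝ))
    (x : EuclideanSpace ℝ (Fin d)) (η : ℝ) : ℝ :=
  ⨅ f : H, innerRisk ℓ f x η

/-- ℓ₁ is H-calibrated with respect to ℓ₂. -/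
def Calibrated (H : Set (EuclideanSpace ℝ (Fin d) → ℝ)) (ℓ₁ ℓ₂ : Loss d) : Prop :=
  ∀ ε > (0:ℝ), ∀ η ∈ Set.Icc (0:ℝ) 1, ∀ x : EuclideanSpace ℝ (Fin d), ‖x‖ ≤ 1 →
    ∃ δ > (0:ℝ), ∀ f ∈ H,
      innerRisk ℓ₁ f x η < minInnerRisk ℓ₁ H x η + δ →
      innerRisk ℓ₂ f x η < minInnerRisk ℓ₂ H x η + ε

/-- The adversarial 0/1 loss with perturbation radius γ. -/
def advLoss (γ : ℝ) : Loss d := fun f x y =>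
  ⨆ x' : Metric.closedBall x γ, (if y * f ↑x' ≤ 0 then (1:ℝ) else 0)

/-- A margin-based loss viewed as a loss. -/
def marginLoss (φ : ℝ → ℝ) : Loss d := fun f x y => φ (y * f x)

/-- The supremum-based surrogate of a margin-based loss. -/
def supLoss (γ : ℝ) (φ : ℝ → ℝ) : Loss d := fun f x y =>
  ⨆ x' : Metric.closedBall x γ, φ (y * f ↑x')

/-- Infimum of f over the closed γ-ball around x. -/
def infBall (γ : ℝ) (f : EuclideanSpace ℝ (Fin d) → ℝ) (x : EuclideanSpace ℝ (Fin d)) : ℝ :=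
  ⨅ x' : Metric.closedBall x γ, f ↑x'

/-- Supremum of f over the closed γ-ball around x. -/
def supBall (γ : ℝ) (f : EuclideanSpace ℝ (Fin d) → ℝ) (x : EuclideanSpace ℝ (Fin d)) : ℝ :=
  ⨆ x' : Metric.closedBall x γ, f ↑x'

/-- x is a distinguishing point for H. -/
def Distinguishing (γ : ℝ) (H : Set (EuclideanSpace ℝ (Fin d) → ℝ))
    (x : EuclideanSpace ℝ (Fin d)) : Prop :=
  ‖x‖ ≤ 1 ∧ (∃ f ∈ H, 0 < infBall γ f x) ∧ (∃ g ∈ H, supBall γ g x < 0)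

/-- H is regular for adversarial calibration. -/
def RegularAdv (γ : ℝ) (H : Set (EuclideanSpace ℝ (Fin d) → ℝ)) : Prop :=
  ∃ x, Distinguishing γ H x

/-- H is symmetric. -/
def SymmetricH (H : Set (EuclideanSpace ℝ (Fin d) → ℝ)) : Prop :=
  ∀ f ∈ H, -f ∈ H

/-- Linear hypothesis set. -/
def Hlin (d : ℕ) : Set (EuclideanSpace ℝ (Fin d) → ℝ) :=
  { f | ∃ w : EuclideanSpace ℝ (Fin d), ‖w‖ = 1 ∧ f = fun x => (inner ℝ w x : ℝ) }

/-- Generalized linear hypothesis set. -/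
def Hg (d : ℕ) (g : ℝ → ℝ) (G : ℝ) : Set (EuclideanSpace ℝ (Fin d) → ℝ) :=
  { f | ∃ (w : EuclideanSpace ℝ (Fin d)) (b : ℝ), ‖w‖ = 1 ∧ |b| ≤ G ∧
      f = fun x => g (inner ℝ w x : ℝ) + b }

/-- ReLU-based hypothesis set. -/
def Hrelu (d : ℕ) (G : ℝ) : Set (EuclideanSpace ℝ (Fin d) → ℝ) :=
  Hg d (fun t => max t 0) G

/-- One-layer ReLU neural network hypothesis set. -/
def Hnn (d n : ℕ) (Λ W : ℝ) : Set (EuclideanSpace ℝ (Fin d) → ℝ) :=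
  { f | ∃ (u : Fin n → ℝ) (w : Fin n → EuclideanSpace ℝ (Fin d)),
      (∑ j, |u j|) ≤ Λ ∧ (∀ j, ‖w j‖ ≤ W) ∧
      f = fun x => ∑ j, u j * max (inner ℝ (w j) x : ℝ) 0 }

/-- All (Borel) measurable functions. -/
def Hall (d : ℕ) : Set (EuclideanSpace ℝ (Fin d) → ℝ) :=
  { f | Measurable f }

/-- The ρ-margin loss. -/
def phiRho (ρ t : ℝ) : ℝ := min 1 (max 0 (1 - t / ρ))

/-!
At the centre `x = 0` with `η = 1/2`, convexity gives `φ(t)/2 + φ(-t)/2 ≥ φ 0` for every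
prediction `t`, so any hypothesis vanishing at `0` minimises the inner margin risk. Such a
hypothesis has adversarial 0/1 risk `1`, since both labels are misclassified at `0` itself,
whereas a hypothesis that stays positive on the `γ`-ball only pays `1/2`. In `H_g` these are
`x ↦ g(w·x) - g(0)` and `x ↦ g(w·x) + G` for a unit vector `w`; the conditions on `g` and `G`
are exactly what puts them in `H_g` and makes the second one positive.
-/

open Metric Set

theorem not_calibrated_of_minimizer {H : Set (EuclideanSpace ℝ (Fin d) → ℝ)} {ℓ₁ ℓ₂ : Loss d}
    {x : EuclideanSpace ℝ (Fin d)} (hx : ‖x‖ ≤ 1) {η : ℝ} (hη : η ∈ Icc (0 : ℝ) 1)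
    {f : EuclideanSpace ℝ (Fin d) → ℝ} (hf : f ∈ H)
    (hmin : innerRisk ℓ₁ f x η ≤ minInnerRisk ℓ₁ H x η) {ε : ℝ} (hε : 0 < ε)
    (hgap : minInnerRisk ℓ₂ H x η + ε ≤ innerRisk ℓ₂ f x η) :
    ¬ Calibrated H ℓ₁ ℓ₂ := fun hcal => by
  obtain ⟨δ, hδ, hcal⟩ := hcal ε hε η hη x hx
  exact (hcal f hf (by linarith)).not_ge hgap

theorem innerRisk_nonneg {ℓ : Loss d} (hℓ : ∀ f x y, 0 ≤ ℓ f x y)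
    (f : EuclideanSpace ℝ (Fin d) → ℝ) (x : EuclideanSpace ℝ (Fin d)) {η : ℝ}
    (hη : η ∈ Icc (0 : ℝ) 1) : 0 ≤ innerRisk ℓ f x η :=
  add_nonneg (mul_nonneg hη.1 (hℓ f x 1)) (mul_nonneg (sub_nonneg.2 hη.2) (hℓ f x (-1)))

theorem minInnerRisk_le_innerRisk {ℓ : Loss d} (hℓ : ∀ f x y, 0 ≤ ℓ f x y)
    {H : Set (EuclideanSpace ℝ (Fin d) → ℝ)} {f : EuclideanSpace ℝ (Fin d) → ℝ} (hf : f ∈ H)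
    (x : EuclideanSpace ℝ (Fin d)) {η : ℝ} (hη : η ∈ Icc (0 : ℝ) 1) :
    minInnerRisk ℓ H x η ≤ innerRisk ℓ f x η :=
  ciInf_le ⟨0, by rintro _ ⟨f', rfl⟩; exact innerRisk_nonneg hℓ f' x hη⟩ (⟨f, hf⟩ : H)

theorem innerRisk_marginLoss_half (φ : ℝ → ℝ) (f : EuclideanSpace ℝ (Fin d) → ℝ)
    (x : EuclideanSpace ℝ (Fin d)) :
    innerRisk (marginLoss φ) f x (1 / 2) = (φ (f x) + φ (-f x)) / 2 := by
  simp only [innerRisk, marginLoss, one_mul, neg_one_mul]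
  ring

theorem le_minInnerRisk_marginLoss_half {φ : ℝ → ℝ} (hconv : ConvexOn ℝ univ φ)
    {H : Set (EuclideanSpace ℝ (Fin d) → ℝ)} (hH : H.Nonempty) (x : EuclideanSpace ℝ (Fin d)) :
    φ 0 ≤ minInnerRisk (marginLoss φ) H x (1 / 2) := by
  have : Nonempty H := hH.to_subtype
  refine le_ciInf fun f => ?_
  have hmid := hconv.2 (mem_univ (f.1 x)) (mem_univ (-f.1 x))
    (by norm_num : (0 : ℝ) ≤ 1 / 2) (by norm_num : (0 : ℝ) ≤ 1 / 2) (by norm_num)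
  simp only [smul_eq_mul, mul_neg, add_neg_cancel] at hmid
  rw [innerRisk_marginLoss_half]
  linarith

section advLoss

variable {γ : ℝ} {f : EuclideanSpace ℝ (Fin d) → ℝ} {x : EuclideanSpace ℝ (Fin d)} {y : ℝ}

theorem advLoss_nonneg : 0 ≤ advLoss γ f x y :=
  Real.iSup_nonneg fun _ => by split_ifs <;> norm_num

theorem advLoss_le_one : advLoss γ f x y ≤ 1 :=
  Real.iSup_le (fun _ => by split_ifs <;> norm_num) zero_le_one

theorem one_le_advLoss {x' : EuclideanSpace ℝ (Fin d)} (hx' : x' ∈ closedBall x γ)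
    (hy : y * f x' ≤ 0) : 1 ≤ advLoss γ f x y := by
  have hbdd : BddAbove (range fun x'' : closedBall x γ => if y * f x'' ≤ 0 then (1 : ℝ) else 0) :=
    ⟨1, by rintro _ ⟨_, rfl⟩; dsimp only; split_ifs <;> norm_num⟩
  simpa [advLoss, hy] using le_ciSup hbdd ⟨x', hx'⟩

theorem advLoss_eq_zero (hpos : ∀ x' ∈ closedBall x γ, 0 < y * f x') : advLoss γ f x y = 0 := by
  simp only [advLoss]
  exact le_antisymm (Real.iSup_le (fun x' => by simp [(hpos x' x'.2).not_ge]) le_rfl)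
    advLoss_nonneg

end advLoss

theorem not_calibrated_marginLoss_advLoss {φ : ℝ → ℝ} (hconv : ConvexOn ℝ univ φ) {γ : ℝ}
    (hγ : 0 ≤ γ) {H : Set (EuclideanSpace ℝ (Fin d) → ℝ)} {x : EuclideanSpace ℝ (Fin d)}
    (hx : ‖x‖ ≤ 1) {f₀ f₁ : EuclideanSpace ℝ (Fin d) → ℝ} (hf₀ : f₀ ∈ H) (hf₀x : f₀ x = 0)
    (hf₁ : f₁ ∈ H) (hf₁pos : ∀ x' ∈ closedBall x γ, 0 < f₁ x') :
    ¬ Calibrated H (marginLoss φ) (advLoss γ) := by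
  have hη : (1 / 2 : ℝ) ∈ Icc (0 : ℝ) 1 := by norm_num
  have hx_mem : x ∈ closedBall x γ := mem_closedBall_self hγ
  refine not_calibrated_of_minimizer hx hη hf₀ ?_ (by norm_num : (0 : ℝ) < 1 / 2) ?_
  · rw [innerRisk_marginLoss_half, hf₀x, neg_zero, add_self_div_two]
    exact le_minInnerRisk_marginLoss_half hconv ⟨f₀, hf₀⟩ x
  · have hmin := minInnerRisk_le_innerRisk (ℓ := advLoss γ) (fun _ _ _ => advLoss_nonneg) hf₁ x hη
    have hf₁_pos : advLoss γ f₁ x 1 = 0 := advLoss_eq_zero fun x' hx' => by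
      simpa using hf₁pos x' hx'
    have hf₁_neg : advLoss γ f₁ x (-1) ≤ 1 := advLoss_le_one
    have hf₀_pos : 1 ≤ advLoss γ f₀ x 1 := one_le_advLoss hx_mem (by simp [hf₀x])
    have hf₀_neg : 1 ≤ advLoss γ f₀ x (-1) := one_le_advLoss hx_mem (by simp [hf₀x])
    simp only [innerRisk] at hmin ⊢
    linarith

theorem neg_le_inner_of_norm_le {w x : EuclideanSpace ℝ (Fin d)} (hw : ‖w‖ = 1) {γ : ℝ}
    (hx : ‖x‖ ≤ γ) : -γ ≤ ⟪w, x⟫ :=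
  neg_le_of_abs_le <| (abs_real_inner_le_norm w x).trans (by rwa [hw, one_mul])

theorem not_calibrated_Hg (hd : 1 ≤ d) {γ : ℝ} (hγ : 0 ≤ γ) {g : ℝ → ℝ} (hgmono : Monotone g)
    {G : ℝ} (hg1 : 0 < g (-γ) + G) (hg2 : g γ - G < 0) {φ : ℝ → ℝ}
    (hconv : ConvexOn ℝ univ φ) :
    ¬ Calibrated (Hg d g G) (marginLoss φ) (advLoss γ) := by
  have : Nonempty (Fin d) := ⟨⟨0, hd⟩⟩
  obtain ⟨w, hw⟩ := exists_norm_eq (EuclideanSpace ℝ (Fin d)) zero_le_one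
  have hg0 : |-g 0| ≤ G := by
    rw [abs_neg, abs_le]
    constructor <;> linarith [hgmono (neg_nonpos.2 hγ), hgmono hγ]
  have hG : |G| ≤ G := (abs_of_nonneg (by linarith [hgmono (neg_le_self hγ)])).le
  refine not_calibrated_marginLoss_advLoss hconv hγ (x := 0) (by simp)
    (⟨w, -g 0, hw, hg0, rfl⟩ : (fun x => g ⟪w, x⟫ + -g 0) ∈ Hg d g G) (by simp)
    (⟨w, G, hw, hG, rfl⟩ : (fun x => g ⟪w, x⟫ + G) ∈ Hg d g G) fun x' hx' => ?_
  have := hgmono (neg_le_inner_of_norm_le hw (mem_closedBall_zero_iff.1 hx'))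
  linarith

theorem stmt3_general (d : ℕ) (hd : 1 ≤ d) (γ : ℝ) (hγ0 : 0 < γ)
    (g : ℝ → ℝ) (hgmono : Monotone g)
    (G : ℝ) (hg1 : 0 < g (-γ) + G) (hg2 : g γ - G < 0)
    (φ : ℝ → ℝ) (hconv : ConvexOn ℝ Set.univ φ) :
    ¬ Calibrated (Hg d g G) (marginLoss φ) (advLoss γ) ∧
    (γ < G → ¬ Calibrated (Hrelu d G) (marginLoss φ) (advLoss γ)) := by
  refine ⟨not_calibrated_Hg hd hγ0.le hgmono hg1 hg2 hconv, fun hγG => ?_⟩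
  have hrelu1 : 0 < max (-γ) 0 + G := by rw [max_eq_right (by linarith)]; linarith
  have hrelu2 : max γ 0 - G < 0 := by rw [max_eq_left hγ0.le]; linarith
  exact not_calibrated_Hg hd hγ0.le (monotone_id.max monotone_const) hrelu1 hrelu2 hconv

theorem stmt3 (d : ℕ) (hd : 1 ≤ d) (γ : ℝ) (hγ0 : 0 < γ) (hγ1 : γ < 1)
    (g : ℝ → ℝ) (hgmono : Monotone g) (hgcont : Continuous g)
    (G : ℝ) (hG : 0 ≤ G) (hg1 : 0 < g (-γ) + G) (hg2 : g γ - G < 0)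
    (φ : ℝ → ℝ) (hφ0 : ∀ t, 0 ≤ φ t) (hconv : ConvexOn ℝ Set.univ φ) :
    ¬ Calibrated (Hg d g G) (marginLoss φ) (advLoss γ) ∧
    (γ < G → ¬ Calibrated (Hrelu d G) (marginLoss φ) (advLoss γ)) :=
  stmt3_general d hd γ hγ0 g hgmono G hg1 hg2 φ hconv
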